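/- Let f : [1,∞) → ℝ be non-negative and non-decreasing, and let F(x) = Σ_{n ≤ x} f(x/n). If there exist real constants A, B such that F(x) = A·x·log x + B·x + o(x) as x → ∞, then ∫_1^x (f(t) − A·t)/t² dt = O(1) as x → ∞, i.e. the integrals are uniformly bounded for x ≥ 1. -/

import Mathlib

open Filter Real Finset MeasureTheory intervalIntegral Asymptotics

/-! Chebyshev's trick: `F x - 2 F (x / 2) = ∑ (-1) ^ (n + 1) f (x / n) ≥ f x - f (x / 2)`, and the
hypothesis makes the left side `O(x)`, so a dyadic induction gives `f x = O(x)`. On each interval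
`[x / (n + 1), x / n]` the weight `1 / t ^ 2` has mass exactly `1 / x`, so by monotonicity
`x ∫₁ˣ f t / t ^ 2` lies between `F x - f x` and `F x`. Hence `∫₁ˣ f t / t ^ 2 = F x / x + O(1)
= A log x + O(1)`, while `∫₁ˣ A t / t ^ 2 = A log x`. -/

noncomputable def moebiusTransform (f : ℝ → ℝ) (x : ℝ) : ℝ :=
  ∑ n ∈ Icc 1 ⌊x⌋₊, f (x / n)

theorem sum_range_neg_one_pow_mul_nonneg {a : ℕ → ℝ} (ha : Antitone a) (h0 : ∀ n, 0 ≤ a n)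
    (N : ℕ) : 0 ≤ ∑ i ∈ range N, (-1) ^ i * a i := by
  induction N using Nat.twoStepInduction generalizing a with
  | zero => simp
  | one => simpa using h0 0
  | more N ih _ =>
    have htail := ih (a := fun i => a (i + 2)) (fun i j h => ha (by omega)) (fun n => h0 _)
    have hpair : a 1 ≤ a 0 := ha zero_le_one
    rw [sum_range_succ', sum_range_succ']
    simp only [pow_succ, neg_one_mul, mul_neg, neg_neg, pow_zero, one_mul, mul_one] at htail ⊢
    linarith

theorem sum_neg_one_pow_succ_mul (s : Finset ℕ) (g : ℕ → ℝ) :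
    ∑ n ∈ s, (-1) ^ (n + 1) * g n = ∑ n ∈ s, g n - 2 * ∑ n ∈ s with Even n, g n := by
  rw [sum_filter, mul_sum, ← sum_sub_distrib]
  refine sum_congr rfl fun n _ => ?_
  rcases Nat.even_or_odd n with hn | hn
  · rw [hn.add_one.neg_one_pow, if_pos hn]; ring
  · rw [hn.add_one.neg_one_pow, if_neg (Nat.not_even_iff_odd.mpr hn)]; ring

theorem moebiusTransform_half (f : ℝ → ℝ) (x : ℝ) :
    moebiusTransform f (x / 2) = ∑ n ∈ Icc 1 ⌊x⌋₊ with Even n, f (x / n) := by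
  have hfloor : ⌊x / 2⌋₊ = ⌊x⌋₊ / 2 := by
    exact_mod_cast Nat.floor_div_natCast x 2
  rw [moebiusTransform, hfloor]
  refine sum_nbij' (2 * ·) (· / 2) ?_ ?_ ?_ ?_ ?_
  · intro m hm
    simp only [mem_filter, mem_Icc] at hm ⊢
    exact ⟨⟨by omega, by omega⟩, even_two_mul m⟩
  · intro n hn
    simp only [mem_filter, mem_Icc] at hn ⊢
    obtain ⟨⟨h1, h2⟩, k, rfl⟩ := hn
    omega
  · intro m _; simp
  · intro n hn
    simp only [mem_filter, mem_Icc] at hn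
    obtain ⟨_, k, rfl⟩ := hn
    omega
  · intro m _
    push_cast
    rw [div_div]

theorem moebiusTransform_sub_two_mul_half (f : ℝ → ℝ) (x : ℝ) :
    moebiusTransform f x - 2 * moebiusTransform f (x / 2)
      = ∑ n ∈ Icc 1 ⌊x⌋₊, (-1) ^ (n + 1) * f (x / n) := by
  rw [sum_neg_one_pow_succ_mul, moebiusTransform_half, moebiusTransform]

theorem moebiusTransform_sub_two_mul_half_isBigO {f : ℝ → ℝ} {A B : ℝ}
    (hF : (fun x => moebiusTransform f x - (A * x * log x + B * x)) =o[atTop] fun x => x) :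
    (fun x => moebiusTransform f x - 2 * moebiusTransform f (x / 2)) =O[atTop] fun x => x := by
  have hhalfO : (fun x : ℝ => x / 2) =O[atTop] fun x => x :=
    isBigO_of_le _ fun x => by
      rw [norm_div, Real.norm_two]; linarith [norm_nonneg x]
  have hhalf := (hF.comp_tendsto
    (tendsto_id.atTop_div_const two_pos : Tendsto (fun x : ℝ => x / 2) atTop atTop)).trans_isBigO
    hhalfO
  have hmain := (hF.sub (hhalf.const_mul_left 2)).isBigO.add
    ((isBigO_refl (fun x : ℝ => x) atTop).const_mul_left (A * log 2))
  refine hmain.congr' ?_ EventuallyEq.rfl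
  filter_upwards [eventually_gt_atTop 0] with x hx
  simp only [Function.comp, log_div hx.ne' two_ne_zero]
  ring

theorem integral_const_div_sq (c : ℝ) {a b : ℝ} (ha : 0 < a) (hab : a ≤ b) :
    ∫ t in a..b, c / t ^ 2 = c * (a⁻¹ - b⁻¹) := by
  have hpos : ∀ t ∈ Set.uIcc a b, 0 < t := fun t ht =>
    ha.trans_le (by rw [Set.uIcc_of_le hab] at ht; exact ht.1)
  have hderiv : ∀ t ∈ Set.uIcc a b, HasDerivAt (fun t => -c * t⁻¹) (c / t ^ 2) t :=
    fun t ht => ((hasDerivAt_inv (hpos t ht).ne').const_mul (-c)).congr_deriv (by ring)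
  have hcont : ContinuousOn (fun t => c / t ^ 2) (Set.uIcc a b) :=
    continuousOn_const.div (continuousOn_pow 2) fun t ht => (pow_pos (hpos t ht) 2).ne'
  rw [integral_eq_sub_of_hasDerivAt hderiv hcont.intervalIntegrable]
  ring

theorem intervalIntegrable_div_sq {f : ℝ → ℝ} {a b : ℝ} (hf : MonotoneOn f (Set.uIcc a b))
    (h0 : (0 : ℝ) ∉ Set.uIcc a b) :
    IntervalIntegrable (fun t => f t / t ^ 2) volume a b := by
  simpa only [div_eq_mul_inv] using
    hf.intervalIntegrable.mul_continuousOn (g := fun t => (t ^ 2)⁻¹)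
      ((continuousOn_pow 2).inv₀ fun t ht => pow_ne_zero 2 (ne_of_mem_of_not_mem ht h0))

theorem integral_div_sq_mem_Icc {f : ℝ → ℝ} {a b : ℝ} (ha : 0 < a) (hab : a ≤ b)
    (hf : MonotoneOn f (Set.Icc a b)) :
    ∫ t in a..b, f t / t ^ 2 ∈ Set.Icc (f a * (a⁻¹ - b⁻¹)) (f b * (a⁻¹ - b⁻¹)) := by
  have h0 : (0 : ℝ) ∉ Set.uIcc a b := by
    rw [Set.uIcc_of_le hab]; exact fun h => ha.not_ge h.1
  have hint := intervalIntegrable_div_sq (Set.uIcc_of_le hab ▸ hf) h0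
  have hconst (c : ℝ) : IntervalIntegrable (fun t => c / t ^ 2) volume a b :=
    intervalIntegrable_div_sq monotoneOn_const h0
  have ha_mem : a ∈ Set.Icc a b := ⟨le_rfl, hab⟩
  have hb_mem : b ∈ Set.Icc a b := ⟨hab, le_rfl⟩
  rw [← integral_const_div_sq _ ha hab, ← integral_const_div_sq _ ha hab]
  exact ⟨integral_mono_on hab (hconst _) hint fun t ht =>
      div_le_div_of_nonneg_right (hf ha_mem ht ht.1) (sq_nonneg t),
    integral_mono_on hab hint (hconst _) fun t ht =>
      div_le_div_of_nonneg_right (hf ht hb_mem ht.2) (sq_nonneg t)⟩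

theorem integral_sub_mul_div_sq {f : ℝ → ℝ} (A : ℝ) {x : ℝ} (hx : 0 < x)
    (hf : IntervalIntegrable (fun t => f t / t ^ 2) volume 1 x) :
    ∫ t in 1..x, (f t - A * t) / t ^ 2 = (∫ t in 1..x, f t / t ^ 2) - A * log x := by
  have h0 : (0 : ℝ) ∉ Set.uIcc 1 x := Set.notMem_uIcc_of_lt zero_lt_one hx
  have hsplit : Set.EqOn (fun t => (f t - A * t) / t ^ 2) (fun t => f t / t ^ 2 - A * t⁻¹)
      (Set.uIcc 1 x) := fun t ht => by
    have : t ≠ 0 := ne_of_mem_of_not_mem ht h0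
    field_simp
  rw [integral_congr hsplit, integral_sub hf
    ((intervalIntegrable_inv (fun t ht => ne_of_mem_of_not_mem ht h0)
      continuousOn_id).const_mul A), intervalIntegral.integral_const_mul, integral_inv h0, div_one]

theorem exists_abs_le_of_isBigO_one {G : ℝ → ℝ} {a : ℝ}
    (hG : ∀ b, a ≤ b → ContinuousOn G (Set.Icc a b)) (hO : G =O[atTop] fun _ => (1 : ℝ)) :
    ∃ C, ∀ x, a ≤ x → |G x| ≤ C := by
  obtain ⟨c, hc⟩ := hO.bound
  obtain ⟨b, hb⟩ := eventually_atTop.mp (hc.and (eventually_ge_atTop a))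
  obtain ⟨C, hC⟩ := isCompact_Icc.exists_bound_of_continuousOn (hG b (hb b le_rfl).2)
  refine ⟨max C c, fun x hx => ?_⟩
  rcases le_total x b with hxb | hbx
  · exact (hC x ⟨hx, hxb⟩).trans (le_max_left _ _)
  · have hGx := (hb x hbx).1
    rw [norm_one, mul_one, Real.norm_eq_abs] at hGx
    exact hGx.trans (le_max_right _ _)

section MonotoneOnIci

variable {f : ℝ → ℝ} (hf : MonotoneOn f (Set.Ici 1))
include hf

theorem sub_half_le_moebiusTransform_sub_two_mul_half (hf0 : ∀ x, 1 ≤ x → 0 ≤ f x) {x : ℝ}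
    (hx : 2 ≤ x) :
    f x - f (x / 2) ≤ moebiusTransform f x - 2 * moebiusTransform f (x / 2) := by
  set N := ⌊x⌋₊
  have hN : 2 ≤ N := Nat.le_floor (by exact_mod_cast hx)
  have hNx : (N : ℝ) ≤ x := Nat.floor_le (by linarith)
  -- truncating at `1` extends the tail `f (x / (i + 3))` to an antitone sequence on all of `ℕ`
  set a : ℕ → ℝ := fun i => f (max (x / (i + 3)) 1)
  have ha : Antitone a := fun i j hij =>
    hf (Set.mem_Ici.mpr (le_max_right _ _)) (Set.mem_Ici.mpr (le_max_right _ _)) <|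
      max_le_max_right _ <| div_le_div_of_nonneg_left (by linarith) (by positivity) (by gcongr)
  have hsplit : ∑ n ∈ Icc 1 N, (-1) ^ (n + 1) * f (x / n)
      = f x - f (x / 2) + ∑ i ∈ range (N - 2), (-1) ^ i * a i := by
    rw [← Ico_add_one_right_eq_Icc, sum_Ico_eq_sum_range, show N + 1 - 1 = N - 2 + 2 by omega,
      sum_range_succ', sum_range_succ']
    have htail : ∀ i ∈ range (N - 2), (-1) ^ (1 + (i + 1 + 1) + 1) * f (x / ↑(1 + (i + 1 + 1)))
        = (-1) ^ i * a i := by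
      intro i hi
      rw [mem_range] at hi
      have hi3 : ((i + 3 : ℕ) : ℝ) ≤ x := le_trans (by exact_mod_cast (by omega)) hNx
      have h1 : 1 ≤ x / (i + 3) := by rw [one_le_div (by positivity)]; exact_mod_cast hi3
      simp only [a, max_eq_left h1]
      push_cast
      ring_nf
    rw [sum_congr rfl htail]
    norm_num
    ring
  rw [moebiusTransform_sub_two_mul_half, hsplit]
  linarith [sum_range_neg_one_pow_mul_nonneg ha (fun i => hf0 _ (le_max_right _ _)) (N - 2)]

theorem exists_le_mul_of_eventually_sub_half_le {c : ℝ}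
    (h : ∀ᶠ x in atTop, f x - f (x / 2) ≤ c * x) : ∃ K, ∀ x, 1 ≤ x → f x ≤ K * x := by
  obtain ⟨x₀, hx₀⟩ := eventually_atTop.mp (h.and (eventually_ge_atTop 1))
  have hx₀1 : 1 ≤ x₀ := (hx₀ x₀ le_rfl).2
  set K := max (max (2 * c) (f (2 * x₀))) 0
  have hK : 0 ≤ K := le_max_right _ _
  have hbase : ∀ x, 1 ≤ x → x ≤ 2 * x₀ → f x ≤ K * x := fun x h1 h2 =>
    calc f x ≤ f (2 * x₀) := hf (Set.mem_Ici.mpr h1) (Set.mem_Ici.mpr (by linarith)) h2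
      _ ≤ K := le_trans (le_max_right _ _) (le_max_left _ _)
      _ ≤ K * x := le_mul_of_one_le_right hK h1
  have hdyadic : ∀ n : ℕ, ∀ x, 1 ≤ x → x ≤ 2 ^ n * (2 * x₀) → f x ≤ K * x := by
    intro n
    induction n with
    | zero => simpa using hbase
    | succ n ih =>
      intro x h1 h2
      rcases le_or_gt x (2 * x₀) with hx | hx
      · exact hbase x h1 hx
      · have hstep := (hx₀ x (by linarith)).1
        have hhalf := ih (x / 2) (by linarith) (by rw [pow_succ] at h2; linarith)
        have h2c : 2 * c ≤ K := le_trans (le_max_left _ _) (le_max_left _ _)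
        nlinarith
  refine ⟨K, fun x hx => ?_⟩
  obtain ⟨n, hn⟩ := pow_unbounded_of_one_lt x one_lt_two
  exact hdyadic n x hx (by nlinarith [pow_pos (two_pos : (0 : ℝ) < 2) n])

theorem exists_le_mul_of_moebiusTransform_isLittleO (hf0 : ∀ x, 1 ≤ x → 0 ≤ f x) {A B : ℝ}
    (hF : (fun x => moebiusTransform f x - (A * x * log x + B * x)) =o[atTop] fun x => x) :
    ∃ K, ∀ x, 1 ≤ x → f x ≤ K * x := by
  obtain ⟨c, hc⟩ := (moebiusTransform_sub_two_mul_half_isBigO hF).bound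
  refine exists_le_mul_of_eventually_sub_half_le hf (c := c) ?_
  filter_upwards [hc, eventually_ge_atTop 2] with x hcx hx
  calc f x - f (x / 2) ≤ moebiusTransform f x - 2 * moebiusTransform f (x / 2) :=
        sub_half_le_moebiusTransform_sub_two_mul_half hf hf0 hx
    _ ≤ c * ‖x‖ := (Real.le_norm_self _).trans hcx
    _ = c * x := by rw [Real.norm_of_nonneg (by linarith)]

theorem intervalIntegrable_div_sq_of_one_le {a b : ℝ} (ha : 1 ≤ a) (hb : 1 ≤ b) :
    IntervalIntegrable (fun t => f t / t ^ 2) volume a b := by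
  have hsub : Set.uIcc a b ⊆ Set.Ici 1 := fun t ht => (le_min ha hb).trans ht.1
  exact intervalIntegrable_div_sq (hf.mono hsub) fun h => absurd (hsub h) (by norm_num)

theorem integral_div_sq_mem_Icc_of_one_le {a b : ℝ} (ha : 1 ≤ a) (hab : a ≤ b) :
    ∫ t in a..b, f t / t ^ 2 ∈ Set.Icc (f a * (a⁻¹ - b⁻¹)) (f b * (a⁻¹ - b⁻¹)) :=
  integral_div_sq_mem_Icc (by linarith) hab (hf.mono fun t ht => ha.trans ht.1)

theorem mul_integral_div_sq_mem_Icc_sum {x : ℝ} {N : ℕ} (hN : 1 ≤ N) (hNx : (N : ℝ) ≤ x) :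
    x * ∫ t in x / N..x, f t / t ^ 2 ∈
      Set.Icc (∑ n ∈ Icc 1 N, f (x / n) - f x) (∑ n ∈ Icc 1 N, f (x / n) - f (x / N)) := by
  induction N, hN using Nat.le_induction with
  | base => simp
  | succ N hN ih =>
    push_cast at hNx ⊢
    have hx : 0 < x := by linarith [show (1 : ℝ) ≤ N by exact_mod_cast hN]
    have hN0 : (0 : ℝ) < N := by positivity
    have hNx' : (N : ℝ) ≤ x := by linarith
    obtain ⟨ih_lower, ih_upper⟩ := ih hNx'
    have h1 : 1 ≤ x / (N + 1) := by rw [one_le_div (by positivity)]; exact hNx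
    have h2 : x / (N + 1) ≤ x / N := div_le_div_of_nonneg_left hx.le hN0 (by linarith)
    have h3 : x / N ≤ x := div_le_self hx.le (by exact_mod_cast hN)
    obtain ⟨piece_lower, piece_upper⟩ := integral_div_sq_mem_Icc_of_one_le hf h1 h2
    have hgap : (x / (N + 1))⁻¹ - (x / N)⁻¹ = x⁻¹ := by
      field_simp; ring
    rw [hgap, ← div_eq_mul_inv, div_le_iff₀' hx] at piece_lower
    rw [hgap, ← div_eq_mul_inv, le_div_iff₀' hx] at piece_upper
    rw [← integral_add_adjacent_intervals
      (intervalIntegrable_div_sq_of_one_le hf h1 (h1.trans h2))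
      (intervalIntegrable_div_sq_of_one_le hf (h1.trans h2) (h1.trans (h2.trans h3))),
      sum_Icc_succ_top (by omega), Nat.cast_succ, mul_add]
    constructor <;> linarith

theorem mul_integral_div_sq_mem_Icc_moebiusTransform (hf0 : ∀ x, 1 ≤ x → 0 ≤ f x) {x : ℝ}
    (hx : 1 ≤ x) :
    x * ∫ t in 1..x, f t / t ^ 2 ∈ Set.Icc (moebiusTransform f x - f x) (moebiusTransform f x) := by
  set N := ⌊x⌋₊
  have hN : 1 ≤ N := Nat.le_floor (by exact_mod_cast hx)
  have hNx : (N : ℝ) ≤ x := Nat.floor_le (by linarith)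
  have hxN : x < N + 1 := Nat.lt_floor_add_one x
  have hN0 : (0 : ℝ) < N := by positivity
  have h1 : 1 ≤ x / N := by rw [one_le_div hN0]; exact hNx
  have h2 : x / N ≤ x := div_le_self (by linarith) (by exact_mod_cast hN)
  obtain ⟨ladder_lower, ladder_upper⟩ := mul_integral_div_sq_mem_Icc_sum hf hN hNx
  obtain ⟨head_lower, head_upper⟩ := integral_div_sq_mem_Icc_of_one_le hf le_rfl h1
  have hx0 : 0 < x := by linarith
  have hgap : (1 : ℝ)⁻¹ - (x / N)⁻¹ = (x - N) / x := by field_simp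
  rw [hgap, mul_div_assoc', div_le_iff₀' hx0] at head_lower
  rw [hgap, mul_div_assoc', le_div_iff₀' hx0] at head_upper
  have hhead_lower : 0 ≤ x * ∫ t in 1..x / N, f t / t ^ 2 :=
    (mul_nonneg (hf0 1 le_rfl) (by linarith)).trans head_lower
  have hhead_upper : x * ∫ t in 1..x / N, f t / t ^ 2 ≤ f (x / N) :=
    head_upper.trans (mul_le_of_le_one_right (hf0 _ h1) (by linarith))
  rw [← integral_add_adjacent_intervals (intervalIntegrable_div_sq_of_one_le hf le_rfl h1)
    (intervalIntegrable_div_sq_of_one_le hf h1 hx), mul_add, moebiusTransform]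
  exact ⟨by linarith, by linarith⟩

theorem abs_integral_div_sq_sub_moebiusTransform_div_le (hf0 : ∀ x, 1 ≤ x → 0 ≤ f x) {x : ℝ}
    (hx : 1 ≤ x) :
    |(∫ t in 1..x, f t / t ^ 2) - moebiusTransform f x / x| ≤ f x / x := by
  obtain ⟨lower, upper⟩ := mul_integral_div_sq_mem_Icc_moebiusTransform hf hf0 hx
  have hx0 : 0 < x := by linarith
  rw [← mul_div_cancel_left₀ (∫ t in 1..x, f t / t ^ 2) hx0.ne', ← sub_div, abs_div,
    abs_of_pos hx0]
  exact div_le_div_of_nonneg_right (abs_le.mpr ⟨by linarith, by linarith [hf0 x hx]⟩) hx0.le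

end MonotoneOnIci

theorem moebius_transform_estimate_integral_bounded
    (f : ℝ → ℝ) (A B : ℝ)
    (hnonneg : ∀ x, 1 ≤ x → 0 ≤ f x)
    (hmono : ∀ x y, 1 ≤ x → x ≤ y → f x ≤ f y)
    (hF : (fun x : ℝ =>
        (∑ n ∈ Finset.Icc 1 ⌊x⌋₊, f (x / n)) - (A * x * Real.log x + B * x))
      =o[atTop] fun x : ℝ => x) :
    ∃ C : ℝ, ∀ x : ℝ, 1 ≤ x →
      |∫ t in (1:ℝ)..x, (f t - A * t) / t ^ 2| ≤ C := by
  have hf : MonotoneOn f (Set.Ici 1) := fun x hx y _ hxy => hmono x y hx hxy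
  obtain ⟨K, hK⟩ := exists_le_mul_of_moebiusTransform_isLittleO hf hnonneg hF
  set G : ℝ → ℝ := fun x => (∫ t in (1 : ℝ)..x, f t / t ^ 2) - A * log x
  have hG_cont : ∀ b, 1 ≤ b → ContinuousOn G (Set.Icc 1 b) := fun b hb =>
    ((continuousOn_primitive_interval' (intervalIntegrable_div_sq_of_one_le hf le_rfl hb)
      Set.left_mem_uIcc).mono Set.Icc_subset_uIcc).sub
      (continuousOn_const.mul (continuousOn_log.mono fun t ht => (zero_lt_one.trans_le ht.1).ne'))
  have hsandwich : (fun x => (∫ t in (1 : ℝ)..x, f t / t ^ 2) - moebiusTransform f x / x)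
      =O[atTop] fun _ => (1 : ℝ) := by
    refine IsBigO.of_bound K ?_
    filter_upwards [eventually_ge_atTop 1] with x hx
    rw [Real.norm_eq_abs, norm_one, mul_one]
    exact (abs_integral_div_sq_sub_moebiusTransform_div_le hf hnonneg hx).trans
      ((div_le_iff₀ (by linarith)).mpr (hK x hx))
  have hG : G =O[atTop] fun _ => (1 : ℝ) := by
    refine ((hsandwich.add (hF.tendsto_div_nhds_zero.isBigO_one ℝ)).add
      (isBigO_const_one ℝ B atTop)).congr' ?_ EventuallyEq.rfl
    filter_upwards [eventually_gt_atTop 0] with x hx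
    simp only [G, moebiusTransform]
    field_simp
    ring
  obtain ⟨C, hC⟩ := exists_abs_le_of_isBigO_one hG_cont hG
  exact ⟨C, fun x hx => by
    rw [integral_sub_mul_div_sq A (by linarith) (intervalIntegrable_div_sq_of_one_le hf le_rfl hx)]
    exact hC x hx⟩
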